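/- Fix 1 < p < 3 and n > 0, and let f_n be the truncation defined by f_n(t) = t for 0 ≤ t ≤ n and f_n(t) = t^{p-1}/((p-1)n^{p-2}) + n - n/(p-1) for t ≥ n, extended oddly. Let θ' = max{1, p-1}. Then θ'·f_n(t) - f_n'(t)·t ≥ 0 for all t ≥ 0. -/
import Mathlib


open Real

/-- The truncation `f_n` restricted to `t ≥ 0`. -/
noncomputable def truncFpos (p n : ℝ) : ℝ → ℝ := fun t =>
  if t ≤ n then t
  else t ^ (p - 1) / ((p - 1) * n ^ (p - 2)) + n - n / (p - 1)

/-- The derivative of the truncation `f_n` on `t ≥ 0`. -/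
noncomputable def truncFpos' (p n : ℝ) : ℝ → ℝ := fun t =>
  if t < n then 1 else t ^ (p - 2) / n ^ (p - 2)

/-- With `θ' = max{1, p-1}`, one has `θ' f_n(t) - f_n'(t) t ≥ 0` for all `t ≥ 0`. -/
theorem truncF_differential_ineq (p n : ℝ) (hp1 : 1 < p) (hp3 : p < 3) (hn : 0 < n) :
    ∀ t : ℝ, 0 ≤ t →
      0 ≤ max 1 (p - 1) * truncFpos p n t - truncFpos' p n t * t := by
  intro t ht
  have hθ : (1:ℝ) ≤ max 1 (p - 1) := le_max_left _ _
  by_cases htn : t ≤ n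
  · -- f(t) = t, and f'(t) = 1 (at t = n, t^(p-2)/n^(p-2) = 1)
    have hf' : truncFpos' p n t = 1 := by
      unfold truncFpos'
      by_cases h : t < n
      · simp [h]
      · have : t = n := le_antisymm htn (not_lt.mp h)
        simp [this, div_self (ne_of_gt (rpow_pos_of_pos hn _))]
    simp only [truncFpos, if_pos htn, hf', one_mul]
    nlinarith
  · push_neg at htn
    have ht0 : 0 < t := lt_trans hn htn
    have hB : (0:ℝ) < n ^ (p - 2) := rpow_pos_of_pos hn _
    have hp1' : (0:ℝ) < p - 1 := by linarith
    -- f'(t) * t = t^(p-1)/n^(p-2)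
    have hft : truncFpos' p n t * t = t ^ (p - 1) / n ^ (p - 2) := by
      unfold truncFpos'
      rw [if_neg (not_lt.mpr htn.le)]
      rw [div_mul_eq_mul_div, ← Real.rpow_add_one (ne_of_gt ht0)]
      ring_nf
    have hA : n ^ (p - 2) * n ≤ t ^ (p - 1) := by
      have h1 : n ^ (p - 2) * n = n ^ (p - 1) := by
        rw [← Real.rpow_add_one (ne_of_gt hn)]; ring_nf
      rw [h1]
      exact Real.rpow_le_rpow hn.le htn.le (by linarith)
    set c := t ^ (p - 1) / n ^ (p - 2) with hc
    have hcn : n ≤ c := (le_div_iff₀ hB).mpr (by nlinarith)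
    have hfv : truncFpos p n t = c / (p - 1) + n - n / (p - 1) := by
      unfold truncFpos
      rw [if_neg (not_le.mpr htn), hc, div_div, mul_comm (p-1)]
    rw [hfv, hft]
    rcases le_or_gt p 2 with h2 | h2
    · have hθ2 : max 1 (p - 1) = 1 := max_eq_left (by linarith)
      rw [hθ2, one_mul]
      have key : 0 ≤ (1 / (p - 1) - 1) * (c - n) := by
        apply mul_nonneg
        · have : (1:ℝ) ≤ 1 / (p - 1) := (le_div_iff₀ hp1').mpr (by linarith)
          linarith
        · linarith
      have : (1 / (p - 1) - 1) * (c - n) = c / (p - 1) + n - n / (p - 1) - c := by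
        field_simp
        ring
      linarith [this ▸ key]
    · have hθ2 : max 1 (p - 1) = p - 1 := max_eq_right (by linarith)
      rw [hθ2]
      have h1 : (p - 1) * (c / (p - 1)) = c := mul_div_cancel₀ c (ne_of_gt hp1')
      have h2' : (p - 1) * (n / (p - 1)) = n := mul_div_cancel₀ n (ne_of_gt hp1')
      nlinarith
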